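/- Let X ~ N(μ, σ²) and Y ~ N(μ', σ²) with |μ − μ'| = w. Then for any measurable set S, P(X ∈ S) ≤ e^ε · P(Y ∈ S) + δ whenever σ² ≥ 2w²·(ln(1/(2δ)) + ε)/ε² and δ ∈ (0, 1/2). -/

import Mathlib

/-!
The densities satisfy `p_μ = exp Λ · p_μ'` for the privacy loss
`Λ x = ((x - μ')² - (x - μ)²) / (2σ²)`, which is affine in `x`. Off the set `{Λ > ε}` the density
of `X` is at most `e^ε` times that of `Y`, and `{Λ > ε}` is a one-sided tail `{±(x - μ) > a}` with
`a = σ √(2 log (1 / (2δ)))` thanks to the variance condition. That tail has mass at most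
`exp (-a² / (2σ²)) / 2 = δ`: comparing densities once more, now against `N(μ + a, σ²)`, bounds it
by `exp (-a² / (2σ²))` times the mass `1/2` that `N(μ + a, σ²)` puts on `(μ + a, ∞)`.
-/

open MeasureTheory ProbabilityTheory Real Set
open scoped NNReal ENNReal

namespace MeasureTheory

lemma withDensity_apply_le_mul_of_forall_le {α : Type*} [MeasurableSpace α] {ρ : Measure α}
    [SFinite ρ] {f g : α → ℝ≥0∞} (hg : Measurable g) {c : ℝ≥0∞} {s : Set α}
    (h : ∀ x ∈ s, f x ≤ c * g x) :
    ρ.withDensity f s ≤ c * ρ.withDensity g s := by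
  rw [withDensity_apply' _ s, withDensity_apply' _ s, ← lintegral_const_mul c hg]
  exact setLIntegral_mono (hg.const_mul c) h

end MeasureTheory

namespace ProbabilityTheory

/-- `log (gaussianPDFReal m v x / gaussianPDFReal m' v x)`, the privacy loss of the outcome `x`. -/
noncomputable def gaussianPrivacyLoss (m m' : ℝ) (v : ℝ≥0) (x : ℝ) : ℝ :=
  ((x - m') ^ 2 - (x - m) ^ 2) / (2 * v)

lemma gaussianPDFReal_eq_exp_privacyLoss_mul (m m' : ℝ) (v : ℝ≥0) (x : ℝ) :
    gaussianPDFReal m v x = exp (gaussianPrivacyLoss m m' v x) * gaussianPDFReal m' v x := by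
  rw [gaussianPDFReal, gaussianPDFReal, mul_left_comm, ← exp_add, gaussianPrivacyLoss]
  congr 2
  ring

variable {m m' : ℝ} {v : ℝ≥0}

lemma gaussianReal_le_exp_mul_of_privacyLoss_le (hv : v ≠ 0) {s : Set ℝ} {L : ℝ}
    (h : ∀ x ∈ s, gaussianPrivacyLoss m m' v x ≤ L) :
    gaussianReal m v s ≤ ENNReal.ofReal (exp L) * gaussianReal m' v s := by
  rw [gaussianReal_of_var_ne_zero _ hv, gaussianReal_of_var_ne_zero _ hv]
  refine withDensity_apply_le_mul_of_forall_le (measurable_gaussianPDF _ _) fun x hx ↦ ?_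
  rw [gaussianPDF, gaussianPDF, gaussianPDFReal_eq_exp_privacyLoss_mul m m',
    ENNReal.ofReal_mul (exp_nonneg _)]
  gcongr
  exact h x hx

lemma gaussianReal_le_exp_mul_add (hv : v ≠ 0) (L : ℝ) (s : Set ℝ) :
    gaussianReal m v s ≤ ENNReal.ofReal (exp L) * gaussianReal m' v s +
      gaussianReal m v {x | L < gaussianPrivacyLoss m m' v x} := by
  set B := {x | L < gaussianPrivacyLoss m m' v x}
  calc gaussianReal m v s ≤ gaussianReal m v (s \ B) + gaussianReal m v (s ∩ B) := by
        rw [add_comm]; exact measure_le_inter_add_sdiff _ s B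
    _ ≤ ENNReal.ofReal (exp L) * gaussianReal m' v s + gaussianReal m v B := by
        gcongr
        · exact (gaussianReal_le_exp_mul_of_privacyLoss_le hv fun x hx ↦ not_lt.1 hx.2).trans
            (by gcongr; exact sdiff_subset)
        · exact inter_subset_right

lemma gaussianReal_Iio_sub_eq_Ioi_add (m a : ℝ) (v : ℝ≥0) :
    gaussianReal m v (Iio (m - a)) = gaussianReal m v (Ioi (m + a)) := by
  have hmap : (gaussianReal m v).map (2 * m - ·) = gaussianReal m v := by
    rw [gaussianReal_map_const_sub]; ring_nf
  conv_rhs => rw [← hmap, Measure.map_apply (by fun_prop) measurableSet_Ioi]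
  congr 1
  ext x
  simp only [mem_Iio, mem_preimage, mem_Ioi]
  constructor <;> intro h <;> linarith

lemma gaussianReal_Ioi_self (m : ℝ) (hv : v ≠ 0) : gaussianReal m v (Ioi m) = 2⁻¹ := by
  have := nullSingletonClass_gaussianReal (μ := m) hv
  have hsymm : gaussianReal m v (Iio m) = gaussianReal m v (Ioi m) := by
    simpa using gaussianReal_Iio_sub_eq_Ioi_add m 0 v
  have htotal : gaussianReal m v (Ioi m) + gaussianReal m v (Ioi m) = 1 := by
    nth_rw 1 [← hsymm, measure_congr Ioi_ae_eq_Ici, ← compl_Ici, add_comm,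
      measure_add_measure_compl measurableSet_Ici, measure_univ]
  rw [← one_div, ENNReal.eq_div_iff two_ne_zero ENNReal.ofNat_ne_top, two_mul, htotal]

lemma gaussianReal_Ioi_add_le (m : ℝ) (hv : v ≠ 0) {a : ℝ} (ha : 0 ≤ a) :
    gaussianReal m v (Ioi (m + a)) ≤ ENNReal.ofReal (exp (-a ^ 2 / (2 * v)) / 2) := by
  have hloss : ∀ x ∈ Ioi (m + a), gaussianPrivacyLoss m (m + a) v x ≤ -a ^ 2 / (2 * v) := by
    intro x hx
    rw [gaussianPrivacyLoss]
    gcongr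
    nlinarith [mem_Ioi.1 hx]
  calc gaussianReal m v (Ioi (m + a))
      ≤ ENNReal.ofReal (exp (-a ^ 2 / (2 * v))) * gaussianReal (m + a) v (Ioi (m + a)) :=
        gaussianReal_le_exp_mul_of_privacyLoss_le hv hloss
    _ = ENNReal.ofReal (exp (-a ^ 2 / (2 * v)) / 2) := by
        rw [gaussianReal_Ioi_self _ hv, ENNReal.ofReal_div_of_pos two_pos, ENNReal.ofReal_ofNat,
          ENNReal.div_eq_inv_mul, mul_comm]

lemma gaussianReal_privacyLoss_gt_le (hv : v ≠ 0) {L a : ℝ} (ha : 0 ≤ a)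
    (haL : a * |m - m'| ≤ L * v - (m - m') ^ 2 / 2) :
    gaussianReal m v {x | L < gaussianPrivacyLoss m m' v x} ≤
      ENNReal.ofReal (exp (-a ^ 2 / (2 * v)) / 2) := by
  have hloss : ∀ x, L < gaussianPrivacyLoss m m' v x →
      a * |m - m'| < (m - m') * (x - m) := by
    intro x hx
    rw [gaussianPrivacyLoss, lt_div_iff₀ (by positivity)] at hx
    nlinarith
  rcases le_total 0 (m - m') with hd | hd
  · refine (measure_mono fun x hx ↦ ?_).trans (gaussianReal_Ioi_add_le m hv ha)
    have := hloss x hx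
    rw [abs_of_nonneg hd] at this
    rw [mem_Ioi]
    nlinarith
  · refine (measure_mono fun x hx ↦ ?_).trans
      ((gaussianReal_Iio_sub_eq_Ioi_add m a v).trans_le (gaussianReal_Ioi_add_le m hv ha))
    have := hloss x hx
    rw [abs_of_nonpos hd] at this
    rw [mem_Iio]
    nlinarith

end ProbabilityTheory

lemma sqrt_two_mul_mul_abs_le_of_le {v w ε L : ℝ} (hv : 0 ≤ v) (hε : 0 < ε) (hL : 0 ≤ L)
    (hvar : 2 * w ^ 2 * (L + ε) / ε ^ 2 ≤ v) :
    √(2 * v * L) * |w| ≤ ε * v - w ^ 2 / 2 := by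
  rw [div_le_iff₀ (by positivity)] at hvar
  set s := √(2 * v * L)
  have hs : s ^ 2 = 2 * v * L := sq_sqrt (by positivity)
  have hsq : (ε * (s * |w|)) ^ 2 ≤ (ε * (ε * v - w ^ 2)) ^ 2 := by
    rw [mul_pow, mul_pow, hs, sq_abs]
    nlinarith [mul_le_mul_of_nonneg_left hvar (by positivity : 0 ≤ ε ^ 2 * v),
      sq_nonneg (ε * w ^ 2)]
  have hrhs : 0 ≤ ε * (ε * v - w ^ 2) := by nlinarith [sq_nonneg w]
  have := (pow_le_pow_iff_left₀ (by positivity) hrhs two_ne_zero).1 hsq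
  nlinarith [le_of_mul_le_mul_left this hε, sq_nonneg w]

theorem gaussian_indistinguishability_general (μ μ' w σ ε δ : ℝ) (hσ : 0 < σ)
    (hw : |μ - μ'| = w) (hε : 0 < ε) (hδ : δ ∈ Set.Ioo (0:ℝ) (1/2))
    (hvar : σ ^ 2 ≥ 2 * w ^ 2 * (Real.log (1 / (2 * δ)) + ε) / ε ^ 2)
    (S : Set ℝ) :
    gaussianReal μ ⟨σ ^ 2, sq_nonneg σ⟩ S ≤
      ENNReal.ofReal (Real.exp ε) * gaussianReal μ' ⟨σ ^ 2, sq_nonneg σ⟩ S +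
        ENNReal.ofReal δ := by
  obtain ⟨hδ0, hδ1⟩ := hδ
  set v : ℝ≥0 := ⟨σ ^ 2, sq_nonneg σ⟩
  have hv : v ≠ 0 := ne_of_gt (show (0 : ℝ) < σ ^ 2 by positivity)
  set L := log (1 / (2 * δ))
  have hL : 0 < L := log_pos (by rw [lt_div_iff₀ (by positivity)]; linarith)
  have hcal : √(2 * v * L) * |μ - μ'| ≤ ε * v - (μ - μ') ^ 2 / 2 :=
    sqrt_two_mul_mul_abs_le_of_le v.2 hε hL.le (by rwa [← sq_abs, hw])
  have htail : gaussianReal μ v {x | ε < gaussianPrivacyLoss μ μ' v x} ≤ ENNReal.ofReal δ := by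
    refine (gaussianReal_privacyLoss_gt_le hv (sqrt_nonneg _) hcal).trans_eq ?_
    have hexponent : 2 * v * L / (2 * v) = L := by field_simp
    rw [sq_sqrt (by positivity), neg_div, hexponent, exp_neg, exp_log (by positivity)]
    congr 1
    field_simp
  calc gaussianReal μ v S
      ≤ ENNReal.ofReal (exp ε) * gaussianReal μ' v S +
        gaussianReal μ v {x | ε < gaussianPrivacyLoss μ μ' v x} :=
        gaussianReal_le_exp_mul_add hv ε S
    _ ≤ ENNReal.ofReal (exp ε) * gaussianReal μ' v S + ENNReal.ofReal δ := by gcongr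

theorem gaussian_indistinguishability (μ μ' w σ ε δ : ℝ) (hσ : 0 < σ)
    (hw : |μ - μ'| = w) (hε : 0 < ε) (hδ : δ ∈ Set.Ioo (0:ℝ) (1/2))
    (hvar : σ ^ 2 ≥ 2 * w ^ 2 * (Real.log (1 / (2 * δ)) + ε) / ε ^ 2)
    (S : Set ℝ) (hS : MeasurableSet S) :
    gaussianReal μ ⟨σ ^ 2, sq_nonneg σ⟩ S ≤
      ENNReal.ofReal (Real.exp ε) * gaussianReal μ' ⟨σ ^ 2, sq_nonneg σ⟩ S +
        ENNReal.ofReal δ :=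
  gaussian_indistinguishability_general μ μ' w σ ε δ hσ hw hε hδ hvar S
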